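/- For every integer r ≥ 0, as y → 0⁺ one has φ_r(y) = 1 − y^{r+1}/((r+1)!)² + O(y^{r+2}); that is, there exist constants C > 0 and y₀ > 0 such that |φ_r(y) − 1 + y^{r+1}/((r+1)!)²| ≤ C y^{r+2} for all 0 < y < y₀. -/

import Mathlib

open scoped BigOperators

/-- `σ` has an increasing subsequence of length `l`. -/
def hasIncSubseq (k : ℕ) (σ : Equiv.Perm (Fin k)) (l : ℕ) : Prop :=
  ∃ s : Fin l → Fin k, StrictMono s ∧ StrictMono (⇑σ ∘ s)

/-- `f k r`: the number of permutations of `{1,…,k}` all of whose increasing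
subsequences have length at most `r`. -/
noncomputable def f (k r : ℕ) : ℕ :=
  Nat.card {σ : Equiv.Perm (Fin k) // ∀ l, hasIncSubseq k σ l → l ≤ r}

/-- `D r t = Σ_{k≥0} f_{k,r} t^{2k}/(k!)²`. -/
noncomputable def D (r : ℕ) (t : ℝ) : ℝ :=
  ∑' k : ℕ, (f k r : ℝ) * t ^ (2 * k) / ((Nat.factorial k : ℝ)) ^ 2

/-- `F(r;y) = e^{-y} Σ_{k≥r} R_{k,r} y^k/(k!)²` with `R_{k,r} = k! - f_{k,r-1}`. -/
noncomputable def Fdist (r : ℕ) (y : ℝ) : ℝ :=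
  Real.exp (-y) *
    ∑' k : ℕ, (((r + k).factorial : ℝ) - (f (r + k) (r - 1) : ℝ)) * y ^ (r + k)
      / (((r + k).factorial : ℝ)) ^ 2

/-- `b j t = I_j(2t) = Σ_{m≥0} t^{2m+j}/(m!(m+j)!)`. -/
noncomputable def b (j : ℕ) (t : ℝ) : ℝ :=
  ∑' m : ℕ, t ^ (2 * m + j) / ((Nat.factorial m : ℝ) * (Nat.factorial (m + j) : ℝ))

/-- `φ_r(y) = e^{-y} D_r(√y)`. -/
noncomputable def phi (r : ℕ) (y : ℝ) : ℝ := Real.exp (-y) * D r (Real.sqrt y)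

/-- First moment `M(y) = Σ_{r≥0} (1 - φ_r(y))`. -/
noncomputable def M (y : ℝ) : ℝ := ∑' r : ℕ, (1 - phi r y)

/-- Second moment `S(y) = Σ_{r≥0} (2r+1)(1 - φ_r(y))`. -/
noncomputable def S (y : ℝ) : ℝ := ∑' r : ℕ, (2 * (r : ℝ) + 1) * (1 - phi r y)

/-- Variance `V(y) = S(y) - M(y)²`. -/
noncomputable def V (y : ℝ) : ℝ := S y - (M y) ^ 2


/-!
Since `f k r = k!` for `k ≤ r` and `f (r+1) r = (r+1)! - 1` (only the identity has an increasing
subsequence of full length), `e^y - D_r(√y) = Σ_k (k! - f k r) y^k / (k!)²` starts with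
`y^(r+1)/((r+1)!)²` and its tail is squeezed between `0` and `Σ_{k ≥ r+2} y^k/k! ≤ y^(r+2) e^y`.
Multiplying by `e^{-y}` gives `1 - φ_r(y) = y^(r+1)/((r+1)!)² + O(y^(r+2))`.
-/

open Nat Real

section IncreasingSubsequences

variable {k l : ℕ} {σ : Equiv.Perm (Fin k)}

lemma hasIncSubseq.le (h : hasIncSubseq k σ l) : l ≤ k := by
  obtain ⟨s, hs, -⟩ := h
  simpa using Fintype.card_le_of_injective s hs.injective

lemma hasIncSubseq_self_iff : hasIncSubseq k σ k ↔ σ = 1 := by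
  constructor
  · rintro ⟨s, hs, hσs⟩
    rw [hs.eq_id, Function.comp_id] at hσs
    exact Equiv.Perm.ext fun x => congrFun hσs.eq_id x
  · rintro rfl
    exact ⟨id, strictMono_id, strictMono_id⟩

lemma f_le_factorial (k r : ℕ) : f k r ≤ k ! := by
  classical
  calc f k r ≤ Fintype.card (Equiv.Perm (Fin k)) := by
        rw [f, Nat.card_eq_fintype_card]; exact Fintype.card_subtype_le _
    _ = k ! := by rw [Fintype.card_perm, Fintype.card_fin]

lemma f_eq_factorial_of_le {k r : ℕ} (h : k ≤ r) : f k r = k ! := by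
  have hall : ∀ σ : Equiv.Perm (Fin k), ∀ l, hasIncSubseq k σ l → l ≤ r :=
    fun _ _ hl => hl.le.trans h
  rw [f, Nat.card_congr (Equiv.subtypeUnivEquiv hall), Nat.card_eq_fintype_card,
    Fintype.card_perm, Fintype.card_fin]

lemma f_succ_self (r : ℕ) : f (r + 1) r = (r + 1)! - 1 := by
  have key (σ : Equiv.Perm (Fin (r + 1))) :
      (∀ l, hasIncSubseq (r + 1) σ l → l ≤ r) ↔ σ ≠ 1 := by
    rw [ne_eq, ← hasIncSubseq_self_iff]
    refine ⟨fun h hσ => by simpa using h _ hσ, fun h l hl => ?_⟩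
    rcases hl.le.lt_or_eq with hlt | rfl
    · omega
    · exact absurd hl h
  rw [f, Nat.card_congr (Equiv.subtypeEquivRight key), Nat.card_eq_fintype_card,
    Fintype.card_subtype_compl, Fintype.card_subtype_eq, Fintype.card_perm, Fintype.card_fin]

end IncreasingSubsequences

section Deficit

variable (r : ℕ) {y : ℝ}

/-- The `k`-th term of `e^y - D_r(√y)`. -/
noncomputable def deficitTerm (y : ℝ) (k : ℕ) : ℝ :=
  ((k ! : ℝ) - f k r) * y ^ k / (k ! : ℝ) ^ 2

lemma deficitTerm_nonneg (hy : 0 ≤ y) (k : ℕ) : 0 ≤ deficitTerm r y k := by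
  have : (0 : ℝ) ≤ (k ! : ℝ) - f k r := sub_nonneg.2 (by exact_mod_cast f_le_factorial k r)
  unfold deficitTerm
  positivity

lemma deficitTerm_le (hy : 0 ≤ y) (k : ℕ) : deficitTerm r y k ≤ y ^ k / k ! := by
  have hk : (0 : ℝ) < k ! := by positivity
  calc deficitTerm r y k ≤ (k ! : ℝ) * y ^ k / (k ! : ℝ) ^ 2 := by
        unfold deficitTerm; gcongr; simp
    _ = y ^ k / k ! := by field_simp

lemma deficitTerm_of_le {k : ℕ} (h : k ≤ r) : deficitTerm r y k = 0 := by
  simp [deficitTerm, f_eq_factorial_of_le h]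

lemma deficitTerm_succ_self : deficitTerm r y (r + 1) = y ^ (r + 1) / ((r + 1)! : ℝ) ^ 2 := by
  rw [deficitTerm, f_succ_self, Nat.cast_sub (Nat.one_le_iff_ne_zero.2 (factorial_ne_zero _))]
  simp

lemma summable_deficitTerm (hy : 0 ≤ y) : Summable (deficitTerm r y) :=
  (Real.summable_pow_div_factorial y).of_nonneg_of_le (deficitTerm_nonneg r hy)
    (deficitTerm_le r hy)

lemma one_sub_phi (hy : 0 ≤ y) : 1 - phi r y = exp (-y) * ∑' k, deficitTerm r y k := by
  have hexp : HasSum (fun k => y ^ k / k !) (exp y) :=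
    Real.exp_eq_exp_ℝ ▸ NormedSpace.expSeries_div_hasSum_exp y
  have hD : D r (√y) = exp y - ∑' k, deficitTerm r y k := by
    refine HasSum.tsum_eq ?_
    have hterm (k : ℕ) : f k r * √y ^ (2 * k) / (k ! : ℝ) ^ 2 =
        y ^ k / (k ! : ℝ) - deficitTerm r y k := by
      rw [pow_mul, sq_sqrt hy, deficitTerm]
      field_simp
      ring
    simpa only [hterm] using hexp.sub (summable_deficitTerm r hy).hasSum
  rw [phi, hD, mul_sub, ← exp_add, neg_add_cancel, exp_zero, sub_sub_cancel]

lemma tsum_deficitTerm (hy : 0 ≤ y) :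
    ∑' k, deficitTerm r y k =
      y ^ (r + 1) / ((r + 1)! : ℝ) ^ 2 + ∑' k, deficitTerm r y (k + (r + 2)) := by
  rw [← (summable_deficitTerm r hy).sum_add_tsum_nat_add (r + 2), Finset.sum_range_succ,
    Finset.sum_eq_zero fun k hk => deficitTerm_of_le r (Finset.mem_range_succ_iff.1 hk),
    deficitTerm_succ_self, zero_add]

lemma tsum_pow_div_factorial_add_le (n : ℕ) (hy : 0 ≤ y) :
    ∑' k, y ^ (k + n) / (k + n)! ≤ y ^ n * exp y := by
  have hsum := Real.summable_pow_div_factorial y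
  have hterm (k : ℕ) : y ^ (k + n) / (k + n)! ≤ y ^ n * (y ^ k / k !) := by
    rw [pow_add, mul_comm (y ^ k), mul_div_assoc]
    gcongr
    exact Nat.le_add_right k n
  calc ∑' k, y ^ (k + n) / (k + n)! ≤ ∑' k, y ^ n * (y ^ k / k !) :=
        Summable.tsum_le_tsum hterm ((summable_nat_add_iff n).2 hsum) (hsum.mul_left _)
    _ = y ^ n * exp y := by rw [tsum_mul_left, Real.exp_eq_exp_ℝ, NormedSpace.exp_eq_tsum_div]

lemma tsum_deficitTerm_tail_le (hy : 0 ≤ y) :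
    ∑' k, deficitTerm r y (k + (r + 2)) ≤ y ^ (r + 2) * exp y :=
  (Summable.tsum_le_tsum (fun _ => deficitTerm_le r hy _)
    ((summable_nat_add_iff _).2 (summable_deficitTerm r hy))
    ((summable_nat_add_iff _).2 (Real.summable_pow_div_factorial y))).trans
    (tsum_pow_div_factorial_add_le _ hy)

end Deficit

theorem stmt11 (r : ℕ) :
    ∃ C > (0 : ℝ), ∃ y₀ > (0 : ℝ), ∀ y : ℝ, 0 < y → y < y₀ →
      |phi r y - 1 + y ^ (r + 1) / ((Nat.factorial (r + 1) : ℝ)) ^ 2| ≤ C * y ^ (r + 2) := by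
  refine ⟨2, two_pos, 1, one_pos, fun y hy _ => ?_⟩
  have hphi := one_sub_phi r hy.le
  rw [tsum_deficitTerm r hy.le] at hphi
  set A : ℝ := y ^ (r + 1) / ((r + 1)! : ℝ) ^ 2
  set R := ∑' k, deficitTerm r y (k + (r + 2))
  replace hphi : phi r y - 1 + A = (1 - exp (-y)) * A - exp (-y) * R := by
    linear_combination -hphi
  have hA : A ≤ y ^ (r + 1) :=
    div_le_self (by positivity) (one_le_pow₀ (by exact_mod_cast (r + 1).factorial_pos))
  have hexp : 1 - exp (-y) ≤ y := by linarith [add_one_le_exp (-y)]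
  have hR_le : exp (-y) * R ≤ y ^ (r + 2) := by
    calc exp (-y) * R ≤ exp (-y) * (y ^ (r + 2) * exp y) := by
          gcongr; exact tsum_deficitTerm_tail_le r hy.le
      _ = y ^ (r + 2) := by rw [mul_left_comm, ← exp_add, neg_add_cancel, exp_zero, mul_one]
  have hfirst_nonneg : 0 ≤ (1 - exp (-y)) * A := mul_nonneg (by simp [hy.le]) (by positivity)
  have hfirst_le : (1 - exp (-y)) * A ≤ y ^ (r + 2) := by
    calc (1 - exp (-y)) * A ≤ y * y ^ (r + 1) := by gcongr
      _ = y ^ (r + 2) := by ring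
  have hR_nonneg : 0 ≤ exp (-y) * R :=
    mul_nonneg (exp_pos _).le (tsum_nonneg fun _ => deficitTerm_nonneg r hy.le _)
  rw [hphi, abs_le]
  constructor <;> linarith
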